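/- Let M be a hypermodular matroid of rank 4 on ground set E, and let l₁, l₂ be two disjoint coplanar lines of M. Then E can be partitioned into lines, with l₁ and l₂ among them, such that every line of the partition other than l₁, l₂ is coplanar with both l₁ and l₂. -/

import Mathlib

open Set

namespace StickyKantor

variable {α : Type*}

/-- The rank of a set in a matroid, as an integer (junk value `0` when infinite). -/
noncomputable def rk (M : Matroid α) (X : Set α) : ℤ :=
  ((⨆ I ∈ {I : Set α | M.Indep I ∧ I ⊆ X}, I.encard).toNat : ℤ)

/-- The modular defect of a pair of sets. -/
noncomputable def mdefect (M : Matroid α) (X Y : Set α) : ℤ :=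
  rk M X + rk M Y - rk M (X ∪ Y) - rk M (X ∩ Y)

/-- A modular pair of sets. -/
def ModularPair (M : Matroid α) (X Y : Set α) : Prop :=
  rk M X + rk M Y = rk M (X ∪ Y) + rk M (X ∩ Y)

/-- `M'` is an extension of `M`: it has a larger ground set and restricts to `M`. -/
def IsExtension (M' M : Matroid α) : Prop :=
  M.E ⊆ M'.E ∧ M = M'.restrict M.E

/-- A point: a rank-1 flat. -/
def IsPoint (M : Matroid α) (p : Set α) : Prop := M.IsFlat p ∧ rk M p = 1

/-- A line: a rank-2 flat. -/
def IsLine (M : Matroid α) (l : Set α) : Prop := M.IsFlat l ∧ rk M l = 2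

/-- A plane: a rank-3 flat. -/
def IsPlane (M : Matroid α) (e : Set α) : Prop := M.IsFlat e ∧ rk M e = 3

/-- Two lines are coplanar if their join has rank at most 3. -/
def Coplanar (M : Matroid α) (l₁ l₂ : Set α) : Prop := rk M (l₁ ∪ l₂) ≤ 3

/-- A hyperplane: a maximal proper flat. -/
def IsHyperplane (M : Matroid α) (H : Set α) : Prop :=
  M.IsFlat H ∧ H ≠ M.E ∧ ∀ F, M.IsFlat F → H ⊂ F → F = M.E

/-- A matroid is hypermodular if every pair of hyperplanes is a modular pair. -/
def Hypermodular (M : Matroid α) : Prop :=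
  ∀ H₁ H₂, IsHyperplane M H₁ → IsHyperplane M H₂ → ModularPair M H₁ H₂

/-- A matroid is modular if every pair of flats is a modular pair. -/
def Modular (M : Matroid α) : Prop :=
  ∀ F₁ F₂, M.IsFlat F₁ → M.IsFlat F₂ → ModularPair M F₁ F₂

/-- A modular cut: an up-closed family of flats closed under intersections of
modular pairs. -/
def IsModularCut (M : Matroid α) (𝓜 : Set (Set α)) : Prop :=
  (∀ F ∈ 𝓜, M.IsFlat F) ∧
  (∀ F ∈ 𝓜, ∀ F', M.IsFlat F' → F ⊆ F' → F' ∈ 𝓜) ∧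
  (∀ F₁ ∈ 𝓜, ∀ F₂ ∈ 𝓜, ModularPair M F₁ F₂ → F₁ ∩ F₂ ∈ 𝓜)

/-- The principal modular cut of a flat `F`. -/
def principalCut (M : Matroid α) (F : Set α) : Set (Set α) :=
  {G | M.IsFlat G ∧ F ⊆ G}

/-- The modular cut generated by a family of flats. -/
def genCut (M : Matroid α) (A : Set (Set α)) : Set (Set α) :=
  ⋂₀ {𝓜 | IsModularCut M 𝓜 ∧ A ⊆ 𝓜}

/-- A non-modular pair of flats is intersectable if the modular cut it generates is
not the principal modular cut of its intersection. -/
def Intersectable (M : Matroid α) (X Y : Set α) : Prop :=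
  genCut M {X, Y} ≠ principalCut M (X ∩ Y)

/-- A matroid is OTE (only trivially extendable) if every nonempty modular cut
is principal. -/
def OTE (M : Matroid α) : Prop :=
  ∀ 𝓜, IsModularCut M 𝓜 → 𝓜 ≠ ∅ → ∃ F, M.IsFlat F ∧ 𝓜 = principalCut M F

/-- A matroid is sticky if every pair of extensions meeting exactly in its ground set
has an amalgam. -/
def Sticky (M : Matroid α) : Prop :=
  ∀ N₁ N₂ : Matroid α, IsExtension N₁ M → IsExtension N₂ M → N₁.E ∩ N₂.E = M.E →
    ∃ A : Matroid α, A.E = N₁.E ∪ N₂.E ∧ IsExtension A N₁ ∧ IsExtension A N₂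

/-- The function `η` of the amalgam construction. -/
noncomputable def eta (M M₁ M₂ : Matroid α) (X : Set α) : ℤ :=
  rk M₁ (X ∩ M₁.E) + rk M₂ (X ∩ M₂.E) - rk M (X ∩ M.E)

/-- The function `ξ` of the amalgam construction. -/
noncomputable def xi (M M₁ M₂ : Matroid α) (X : Set α) : ℤ :=
  sInf {n : ℤ | ∃ Y, X ⊆ Y ∧ Y ⊆ M₁.E ∪ M₂.E ∧ n = eta M M₁ M₂ Y}

/-- The lattice `𝓛(M₁,M₂)` of sets whose traces on both ground sets are flats. -/
def latticeL (M₁ M₂ : Matroid α) : Set (Set α) :=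
  {X | X ⊆ M₁.E ∪ M₂.E ∧ M₁.IsFlat (X ∩ M₁.E) ∧ M₂.IsFlat (X ∩ M₂.E)}

/-!
Let `P` be the plane spanned by `l₁` and `l₂`. In a hypermodular matroid of rank 4 two distinct
planes meet in a line, so for `x ∉ P` the planes `cl(x ∪ l₁)` and `cl(x ∪ l₂)` meet in a line
through `x`, the transversal of `x`; it misses `P` and is coplanar with `l₁` and `l₂`. Fixing one
transversal `m`, each plane through `m` meets `P` in a line, and these lines partition `P`; they
include `l₁` and `l₂` because `m` is coplanar with both. Both constructions give equivalence
classes by the exchange property: if `p ∈ cl(x ∪ X) \ cl X` then `cl(p ∪ X) = cl(x ∪ X)`.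
-/

section Flat

variable {M : Matroid α} {F F' X : Set α}

lemma _root_.Matroid.IsFlat.inter (hF : M.IsFlat F) (hF' : M.IsFlat F') : M.IsFlat (F ∩ F') := by
  rw [inter_eq_iInter]
  exact Matroid.IsFlat.iInter (by rintro (_ | _) <;> assumption)

lemma _root_.Matroid.IsFlat.closure_subset_of_subset (hF : M.IsFlat F) (h : X ⊆ F) :
    M.closure X ⊆ F :=
  hF.closure ▸ M.closure_subset_closure h

end Flat

section Rank

variable {M : Matroid α} {X Y F F' : Set α} {e : α}

lemma rk_eq_toNat_eRk (M : Matroid α) (X : Set α) : rk M X = (M.eRk X).toNat := by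
  obtain ⟨I, hI⟩ := M.exists_isBasis' X
  have hsup : (⨆ J ∈ {J : Set α | M.Indep J ∧ J ⊆ X}, J.encard) = M.eRk X :=
    le_antisymm (iSup₂_le fun J hJ => hJ.1.encard_le_eRk_of_subset hJ.2)
      (hI.eRk_eq_encard ▸ le_iSup₂_of_le I ⟨hI.indep, hI.subset⟩ le_rfl)
  rw [rk, hsup]

lemma rk_empty (M : Matroid α) : rk M ∅ = 0 := by
  simp [rk_eq_toNat_eRk]

lemma rk_closure (M : Matroid α) (X : Set α) : rk M (M.closure X) = rk M X := by
  rw [rk_eq_toNat_eRk, rk_eq_toNat_eRk, Matroid.eRk_closure_eq]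

variable [M.RankFinite]

lemma rk_mono (h : X ⊆ Y) : rk M X ≤ rk M Y := by
  rw [rk_eq_toNat_eRk, rk_eq_toNat_eRk]
  exact_mod_cast ENat.toNat_le_toNat (M.eRk_mono h) (M.isRkFinite_set Y).eRk_lt_top.ne

lemma rk_insert_of_notMem_closure (he : e ∈ M.E \ M.closure X) :
    rk M (insert e X) = rk M X + 1 := by
  rw [rk_eq_toNat_eRk, rk_eq_toNat_eRk, Matroid.eRk_insert_eq_add_one he,
    ENat.toNat_add (M.isRkFinite_set X).eRk_lt_top.ne (by simp)]
  simp

lemma _root_.Matroid.IsFlat.eq_of_subset_of_rk_le (hF : M.IsFlat F) (hF' : M.IsFlat F') (h : F ⊆ F')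
    (hr : rk M F' ≤ rk M F) : F = F' := by
  rw [← hF.closure, ← hF'.closure]
  refine (M.isRkFinite_set F).closure_eq_closure_of_subset_of_eRk_ge_eRk h ?_
  rw [rk_eq_toNat_eRk, rk_eq_toNat_eRk] at hr
  rw [← ENat.natCast_toNat (M.isRkFinite_set F).eRk_lt_top.ne,
    ← ENat.natCast_toNat (M.isRkFinite_set F').eRk_lt_top.ne]
  exact_mod_cast hr

end Rank

section Geometry

variable {M : Matroid α} {l l' l₁ l₂ P : Set α} {x : α}

lemma IsLine.nonempty (hl : IsLine M l) : l.Nonempty := by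
  rw [nonempty_iff_ne_empty]
  rintro rfl
  simpa [rk_empty] using hl.2

lemma IsPlane.exists_notMem (hrank : rk M M.E = 4) (hP : IsPlane M P) : ∃ z ∈ M.E, z ∉ P := by
  by_contra! h
  have h3 := hP.2
  rw [hP.1.subset_ground.antisymm h, hrank] at h3
  norm_num at h3

variable [M.RankFinite]

lemma IsLine.eq_of_subset (hl : IsLine M l) (hl' : IsLine M l') (h : l ⊆ l') : l = l' :=
  hl.1.eq_of_subset_of_rk_le hl'.1 h (by rw [hl.2, hl'.2])

lemma IsPlane.coplanar_of_subset (hP : IsPlane M P) (h₁ : l₁ ⊆ P) (h₂ : l₂ ⊆ P) :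
    Coplanar M l₁ l₂ :=
  (rk_mono (union_subset h₁ h₂)).trans hP.2.le

lemma IsLine.isPlane_closure_insert (hl : IsLine M l) (hx : x ∈ M.E) (hxl : x ∉ l) :
    IsPlane M (M.closure (insert x l)) := by
  refine ⟨M.isFlat_closure _, ?_⟩
  rw [rk_closure, rk_insert_of_notMem_closure ⟨hx, by rwa [hl.1.closure]⟩, hl.2]
  norm_num

lemma IsPlane.closure_insert_eq (hP : IsPlane M P) (hl : IsLine M l) (hlP : l ⊆ P) (hxP : x ∈ P)
    (hxl : x ∉ l) : M.closure (insert x l) = P := by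
  have hQ := hl.isPlane_closure_insert (hP.1.subset_ground hxP) hxl
  exact hQ.1.eq_of_subset_of_rk_le hP.1 (hP.1.closure_subset_of_subset (insert_subset hxP hlP))
    (by rw [hP.2, hQ.2])

lemma isPlane_closure_union (h₁ : IsLine M l₁) (h₂ : IsLine M l₂) (hdisj : Disjoint l₁ l₂)
    (hcop : Coplanar M l₁ l₂) : IsPlane M (M.closure (l₁ ∪ l₂)) := by
  obtain ⟨y, hy⟩ := h₂.nonempty
  have hA := h₁.isPlane_closure_insert (h₂.1.subset_ground hy) (Set.disjoint_right.1 hdisj hy)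
  refine ⟨M.isFlat_closure _, le_antisymm ((rk_closure M _).trans_le hcop) ?_⟩
  calc (3 : ℤ) = rk M (insert y l₁) := by rw [← hA.2, rk_closure]
    _ ≤ rk M (l₁ ∪ l₂) := rk_mono (insert_subset (Or.inr hy) subset_union_left)
    _ = rk M (M.closure (l₁ ∪ l₂)) := (rk_closure M _).symm

lemma IsPlane.isHyperplane (hrank : rk M M.E = 4) (hP : IsPlane M P) : IsHyperplane M P := by
  obtain ⟨z, hz, hzP⟩ := hP.exists_notMem hrank
  refine ⟨hP.1, fun h => hzP (h ▸ hz), fun F hF hPF => ?_⟩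
  obtain ⟨y, hyF, hyP⟩ := exists_of_ssubset hPF
  have h4 : rk M (insert y P) = 4 := by
    rw [rk_insert_of_notMem_closure ⟨hF.subset_ground hyF, by rwa [hP.1.closure]⟩, hP.2]; rfl
  refine hF.eq_of_subset_of_rk_le M.ground_isFlat hF.subset_ground ?_
  rw [hrank, ← h4]
  exact rk_mono (insert_subset hyF hPF.subset)

end Geometry

section Hypermodular

variable {M : Matroid α} [M.RankFinite] {l P Q : Set α} {x : α}

lemma IsPlane.isLine_inter (hhm : Hypermodular M) (hrank : rk M M.E = 4) (hP : IsPlane M P)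
    (hQ : IsPlane M Q) (hne : P ≠ Q) : IsLine M (P ∩ Q) := by
  have hmod := hhm P Q (hP.isHyperplane hrank) (hQ.isHyperplane hrank)
  obtain ⟨y, hyQ, hyP⟩ : ∃ y ∈ Q, y ∉ P := not_subset.1 fun h =>
    hne (hQ.1.eq_of_subset_of_rk_le hP.1 h (by rw [hP.2, hQ.2])).symm
  have hunion : rk M (P ∪ Q) = 4 := by
    refine le_antisymm (hrank ▸ rk_mono (union_subset hP.1.subset_ground hQ.1.subset_ground)) ?_
    calc (4 : ℤ) = rk M (insert y P) := by
          rw [rk_insert_of_notMem_closure ⟨hQ.1.subset_ground hyQ, by rwa [hP.1.closure]⟩, hP.2]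
          rfl
      _ ≤ rk M (P ∪ Q) := rk_mono (insert_subset (Or.inr hyQ) subset_union_left)
  refine ⟨hP.1.inter hQ.1, ?_⟩
  rw [ModularPair, hP.2, hQ.2, hunion] at hmod
  linarith

lemma IsPlane.closure_insert_inter_eq (hhm : Hypermodular M) (hrank : rk M M.E = 4)
    (hP : IsPlane M P) (hl : IsLine M l) (hlP : l ⊆ P) (hx : x ∈ M.E) (hxP : x ∉ P) :
    M.closure (insert x l) ∩ P = l := by
  have hA := hl.isPlane_closure_insert hx fun h => hxP (hlP h)
  have hxA : x ∈ M.closure (insert x l) := M.mem_closure_of_mem' (mem_insert x l) hx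
  refine (hl.eq_of_subset (hA.isLine_inter hhm hrank hP fun h => hxP (h ▸ hxA)) ?_).symm
  exact subset_inter (M.subset_closure_of_subset' (subset_insert x l) hl.1.subset_ground) hlP

end Hypermodular

def transversal (M : Matroid α) (l₁ l₂ : Set α) (x : α) : Set α :=
  M.closure (insert x l₁) ∩ M.closure (insert x l₂)

section Transversal

variable {M : Matroid α} {l₁ l₂ P : Set α} {x p : α}

lemma mem_transversal (hx : x ∈ M.E) : x ∈ transversal M l₁ l₂ x :=
  ⟨M.mem_closure_of_mem' (mem_insert x l₁) hx, M.mem_closure_of_mem' (mem_insert x l₂) hx⟩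

lemma transversal_eq_of_mem (h₁ : M.IsFlat l₁) (h₂ : M.IsFlat l₂)
    (hp : p ∈ transversal M l₁ l₂ x) (hp₁ : p ∉ l₁) (hp₂ : p ∉ l₂) :
    transversal M l₁ l₂ p = transversal M l₁ l₂ x := by
  rw [transversal, transversal, Matroid.closure_insert_congr ⟨hp.1, by rwa [h₁.closure]⟩,
    Matroid.closure_insert_congr ⟨hp.2, by rwa [h₂.closure]⟩]

variable [M.RankFinite]

lemma coplanar_transversal_left (h₁ : IsLine M l₁) (hx : x ∈ M.E) (hx₁ : x ∉ l₁) :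
    Coplanar M (transversal M l₁ l₂ x) l₁ :=
  (h₁.isPlane_closure_insert hx hx₁).coplanar_of_subset inter_subset_left
    (M.subset_closure_of_subset' (subset_insert x l₁) h₁.1.subset_ground)

lemma coplanar_transversal_right (h₂ : IsLine M l₂) (hx : x ∈ M.E) (hx₂ : x ∉ l₂) :
    Coplanar M (transversal M l₁ l₂ x) l₂ :=
  (h₂.isPlane_closure_insert hx hx₂).coplanar_of_subset inter_subset_right
    (M.subset_closure_of_subset' (subset_insert x l₂) h₂.1.subset_ground)

lemma disjoint_transversal (hhm : Hypermodular M) (hrank : rk M M.E = 4) (hP : IsPlane M P)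
    (h₁ : IsLine M l₁) (h₂ : IsLine M l₂) (hl₁P : l₁ ⊆ P) (hl₂P : l₂ ⊆ P) (hdisj : Disjoint l₁ l₂)
    (hx : x ∈ M.E) (hxP : x ∉ P) : Disjoint (transversal M l₁ l₂ x) P :=
  Set.disjoint_left.2 fun q hq hqP => by
    have hq₁ : q ∈ l₁ := hP.closure_insert_inter_eq hhm hrank h₁ hl₁P hx hxP ▸ ⟨hq.1, hqP⟩
    have hq₂ : q ∈ l₂ := hP.closure_insert_inter_eq hhm hrank h₂ hl₂P hx hxP ▸ ⟨hq.2, hqP⟩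
    exact Set.disjoint_left.1 hdisj hq₁ hq₂

lemma isLine_transversal (hhm : Hypermodular M) (hrank : rk M M.E = 4) (hP : IsPlane M P)
    (h₁ : IsLine M l₁) (h₂ : IsLine M l₂) (hl₁P : l₁ ⊆ P) (hl₂P : l₂ ⊆ P) (hdisj : Disjoint l₁ l₂)
    (hx : x ∈ M.E) (hxP : x ∉ P) : IsLine M (transversal M l₁ l₂ x) := by
  refine (h₁.isPlane_closure_insert hx fun h => hxP (hl₁P h)).isLine_inter hhm hrank
    (h₂.isPlane_closure_insert hx fun h => hxP (hl₂P h)) fun h => ?_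
  have h12 : l₁ = l₂ := by
    rw [← hP.closure_insert_inter_eq hhm hrank h₁ hl₁P hx hxP, h,
      hP.closure_insert_inter_eq hhm hrank h₂ hl₂P hx hxP]
  subst h12
  exact h₁.nonempty.ne_empty (disjoint_self.1 hdisj)

end Transversal

def projection (M : Matroid α) (m P : Set α) (x : α) : Set α :=
  M.closure (insert x m) ∩ P

section Projection

variable {M : Matroid α} {l m P : Set α} {x p : α}

lemma mem_projection (hx : x ∈ M.E) (hxP : x ∈ P) : x ∈ projection M m P x :=
  ⟨M.mem_closure_of_mem' (mem_insert x m) hx, hxP⟩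

lemma projection_eq_of_mem (hm : M.IsFlat m) (hp : p ∈ projection M m P x) (hpm : p ∉ m) :
    projection M m P p = projection M m P x := by
  rw [projection, projection, Matroid.closure_insert_congr ⟨hp.1, by rwa [hm.closure]⟩]

variable [M.RankFinite]

lemma isLine_projection (hhm : Hypermodular M) (hrank : rk M M.E = 4) (hm : IsLine M m)
    (hP : IsPlane M P) (hmP : Disjoint m P) (hxP : x ∈ P) : IsLine M (projection M m P x) := by
  refine (hm.isPlane_closure_insert (hP.1.subset_ground hxP)
    (Set.disjoint_right.1 hmP hxP)).isLine_inter hhm hrank hP fun h => ?_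
  obtain ⟨y, hy⟩ := hm.nonempty
  exact Set.disjoint_left.1 hmP hy
    (h ▸ M.subset_closure_of_subset' (subset_insert x m) hm.1.subset_ground hy)

lemma projection_eq_of_coplanar (hhm : Hypermodular M) (hrank : rk M M.E = 4) (hm : IsLine M m)
    (hP : IsPlane M P) (hmP : Disjoint m P) (hl : IsLine M l) (hlP : l ⊆ P)
    (hml : Coplanar M m l) (hx : x ∈ l) : projection M m P x = l := by
  have hQ := isPlane_closure_union hm hl (hmP.mono_right hlP) hml
  have hlQ : l ⊆ M.closure (m ∪ l) :=
    M.subset_closure_of_subset' subset_union_right hl.1.subset_ground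
  have hxQ : M.closure (insert x m) = M.closure (m ∪ l) :=
    hQ.closure_insert_eq hm (M.subset_closure_of_subset' subset_union_left hm.1.subset_ground)
      (hlQ hx) (Set.disjoint_right.1 hmP (hlP hx))
  refine (hl.eq_of_subset (isLine_projection hhm hrank hm hP hmP (hlP hx)) ?_).symm
  exact subset_inter (hxQ ▸ hlQ) hlP

end Projection

open Classical in
def lineThrough (M : Matroid α) (P l₁ l₂ m : Set α) (x : α) : Set α :=
  if x ∈ P then projection M m P x else transversal M l₁ l₂ x

lemma lineThrough_spec {M : Matroid α} [M.RankFinite] {P l₁ l₂ m : Set α} {x : α}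
    (hhm : Hypermodular M) (hrank : rk M M.E = 4) (hP : IsPlane M P) (h₁ : IsLine M l₁)
    (h₂ : IsLine M l₂) (hl₁P : l₁ ⊆ P) (hl₂P : l₂ ⊆ P) (hdisj : Disjoint l₁ l₂)
    (hm : IsLine M m) (hmP : Disjoint m P) (hx : x ∈ M.E) :
    IsLine M (lineThrough M P l₁ l₂ m x) ∧ x ∈ lineThrough M P l₁ l₂ m x ∧
      (∀ p ∈ lineThrough M P l₁ l₂ m x, lineThrough M P l₁ l₂ m p = lineThrough M P l₁ l₂ m x) ∧
      Coplanar M (lineThrough M P l₁ l₂ m x) l₁ ∧ Coplanar M (lineThrough M P l₁ l₂ m x) l₂ := by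
  by_cases hxP : x ∈ P
  · simp only [lineThrough, if_pos hxP]
    refine ⟨isLine_projection hhm hrank hm hP hmP hxP, mem_projection hx hxP, fun p hp => ?_,
      hP.coplanar_of_subset inter_subset_right hl₁P, hP.coplanar_of_subset inter_subset_right hl₂P⟩
    rw [if_pos hp.2]
    exact projection_eq_of_mem hm.1 hp (Set.disjoint_right.1 hmP hp.2)
  · simp only [lineThrough, if_neg hxP]
    have hT := disjoint_transversal hhm hrank hP h₁ h₂ hl₁P hl₂P hdisj hx hxP
    refine ⟨isLine_transversal hhm hrank hP h₁ h₂ hl₁P hl₂P hdisj hx hxP, mem_transversal hx,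
      fun p hp => ?_, coplanar_transversal_left h₁ hx fun h => hxP (hl₁P h),
      coplanar_transversal_right h₂ hx fun h => hxP (hl₂P h)⟩
    have hpP := Set.disjoint_left.1 hT hp
    rw [if_neg hpP]
    exact transversal_eq_of_mem h₁.1 h₂.1 hp (fun h => hpP (hl₁P h)) fun h => hpP (hl₂P h)

section Partition

variable {β : Type*} {E : Set β} {L : β → Set β}

lemma sUnion_image_eq_of_mem_self (hmem : ∀ x ∈ E, x ∈ L x) (hsub : ∀ x ∈ E, L x ⊆ E) :
    ⋃₀ (L '' E) = E :=
  subset_antisymm (sUnion_subset (by rintro _ ⟨x, hx, rfl⟩; exact hsub x hx))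
    fun x hx => ⟨L x, mem_image_of_mem L hx, hmem x hx⟩

lemma inter_eq_empty_of_mem_image (hcls : ∀ x ∈ E, ∀ p ∈ L x, L p = L x) {l l' : Set β}
    (hl : l ∈ L '' E) (hl' : l' ∈ L '' E) (hne : l ≠ l') : l ∩ l' = ∅ := by
  obtain ⟨x, hx, rfl⟩ := hl
  obtain ⟨y, hy, rfl⟩ := hl'
  refine eq_empty_of_forall_notMem fun p hp => hne ?_
  rw [← hcls x hx p hp.1, hcls y hy p hp.2]

end Partition

/-- line partition of the ground set of a hypermodular rank-4 matroid
extending two disjoint coplanar lines. -/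
theorem line_partition (M : Matroid α) [M.RankFinite]
    (hhm : Hypermodular M) (hrank : rk M M.E = 4)
    (l₁ l₂ : Set α) (h₁ : IsLine M l₁) (h₂ : IsLine M l₂)
    (hdisj : l₁ ∩ l₂ = ∅) (hcop : Coplanar M l₁ l₂) :
    ∃ Γ : Set (Set α), l₁ ∈ Γ ∧ l₂ ∈ Γ ∧
      (∀ l ∈ Γ, IsLine M l) ∧
      (∀ l ∈ Γ, ∀ l' ∈ Γ, l ≠ l' → l ∩ l' = ∅) ∧
      ⋃₀ Γ = M.E ∧
      (∀ l ∈ Γ, l ≠ l₁ → l ≠ l₂ → Coplanar M l l₁ ∧ Coplanar M l l₂) := by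
  rw [← disjoint_iff_inter_eq_empty] at hdisj
  set P := M.closure (l₁ ∪ l₂)
  have hP : IsPlane M P := isPlane_closure_union h₁ h₂ hdisj hcop
  have hl₁P : l₁ ⊆ P := M.subset_closure_of_subset' subset_union_left h₁.1.subset_ground
  have hl₂P : l₂ ⊆ P := M.subset_closure_of_subset' subset_union_right h₂.1.subset_ground
  obtain ⟨z, hz, hzP⟩ := hP.exists_notMem hrank
  set m := transversal M l₁ l₂ z
  have hm : IsLine M m := isLine_transversal hhm hrank hP h₁ h₂ hl₁P hl₂P hdisj hz hzP
  have hmP : Disjoint m P := disjoint_transversal hhm hrank hP h₁ h₂ hl₁P hl₂P hdisj hz hzP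
  have hL := fun x (hx : x ∈ M.E) => lineThrough_spec hhm hrank hP h₁ h₂ hl₁P hl₂P hdisj hm hmP hx
  have hΓ : ∀ l, IsLine M l → l ⊆ P → Coplanar M m l → l ∈ lineThrough M P l₁ l₂ m '' M.E := by
    intro l hl hlP hml
    obtain ⟨y, hy⟩ := hl.nonempty
    refine ⟨y, hl.1.subset_ground hy, ?_⟩
    rw [lineThrough, if_pos (hlP hy)]
    exact projection_eq_of_coplanar hhm hrank hm hP hmP hl hlP hml hy
  refine ⟨lineThrough M P l₁ l₂ m '' M.E,
    hΓ l₁ h₁ hl₁P (coplanar_transversal_left h₁ hz fun h => hzP (hl₁P h)),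
    hΓ l₂ h₂ hl₂P (coplanar_transversal_right h₂ hz fun h => hzP (hl₂P h)),
    ?_, fun l hl l' hl' => inter_eq_empty_of_mem_image (fun x hx => (hL x hx).2.2.1) hl hl',
    sUnion_image_eq_of_mem_self (fun x hx => (hL x hx).2.1) fun x hx => (hL x hx).1.1.subset_ground,
    ?_⟩
  · rintro _ ⟨x, hx, rfl⟩
    exact (hL x hx).1
  · rintro _ ⟨x, hx, rfl⟩ - -
    exact (hL x hx).2.2.2

end StickyKantor
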